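/- arXiv:1607.03439 — 6 statements merged into one kernel-verified Lean document; each statement's English description precedes it below -/
import Mathlib

section
/- Let n be a natural number and K : ℝⁿ → ℝⁿ a C³ map. Then K satisfies the Killing equation for the Euclidean metric (∂K^i/∂x^j (x) + ∂K^j/∂x^i (x) = 0 for all x, i, j) if and only if there exist a vector c ∈ ℝⁿ and an antisymmetric n×n real matrix B (Bᵀ = −B) such that K(x) = c + B·x for all x ∈ ℝⁿ. In other words, all infinitesimal isometries of the Euclidean metric are translations and infinitesimal rotations. -/
/-!
Differentiating the Killing equation shows that the third-order array of second derivatives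
`∂_p ∂_q K^i` is antisymmetric in `(i, q)`, and by Schwarz's theorem it is symmetric in `(p, q)`.
An array with these two symmetries vanishes, so the Jacobian of `K` is constant and `K` is affine;
the Killing equation at one point then says that its linear part is antisymmetric.
-/

/-- The partial derivative of a function `f : ℝⁿ → ℝ` in the `j`-th coordinate
direction at the point `x`. -/
noncomputable def pderiv' {n : ℕ} (j : Fin n) (f : (Fin n → ℝ) → ℝ) (x : Fin n → ℝ) : ℝ :=
  fderiv ℝ f x (Pi.single j 1)

open Matrix

theorem eq_zero_of_symm_of_antisymm {ι G : Type*} [AddCommGroup G] [IsAddTorsionFree G]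
    {T : ι → ι → ι → G} (hsymm : ∀ i p q, T i p q = T i q p)
    (hanti : ∀ i p q, T i p q = -T q p i) (i p q : ι) : T i p q = 0 := by
  refine self_eq_neg.mp ?_
  calc T i p q = T i q p := hsymm ..
    _ = -T p q i := hanti ..
    _ = -T p i q := by rw [hsymm]
    _ = T q i p := by rw [hanti p i q, neg_neg]
    _ = T q p i := hsymm ..
    _ = -T i p q := hanti ..

theorem Matrix.transpose_eq_neg_iff {ι R : Type*} [AddCommGroup R] (A : Matrix ι ι R) :
    Aᵀ = -A ↔ ∀ i j, A i j + A j i = 0 := by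
  rw [← Matrix.ext_iff]
  simp only [Matrix.transpose_apply, Matrix.neg_apply, eq_neg_iff_add_eq_zero, add_comm]

theorem eq_add_of_fderiv_eq {𝕜 E F : Type*} [NontriviallyNormedField 𝕜] [IsRCLikeNormedField 𝕜]
    [NormedAddCommGroup E] [NormedSpace 𝕜 E] [NormedAddCommGroup F] [NormedSpace 𝕜 F]
    {f : E → F} {L : E →L[𝕜] F} (hf : Differentiable 𝕜 f) (hL : ∀ x, fderiv 𝕜 f x = L) (x : E) :
    f x = f 0 + L x := by
  have hconst := is_const_of_fderiv_eq_zero (hf.sub L.differentiable)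
    (fun y => by rw [fderiv_sub (hf y) L.differentiableAt, hL, L.fderiv, sub_self]) x 0
  simpa [sub_eq_iff_eq_add, add_comm] using hconst

theorem ContinuousLinearMap.ext_single {ι F : Type*} [Fintype ι] [DecidableEq ι]
    [NormedAddCommGroup F] [NormedSpace ℝ F] {f g : (ι → ℝ) →L[ℝ] F}
    (h : ∀ i, f (Pi.single i 1) = g (Pi.single i 1)) : f = g :=
  coe_injective <| (Pi.basisFun ℝ ι).ext fun i => by simpa using h i

section Jacobian

variable {ι : Type*} [Fintype ι]

theorem hasFDerivAt_fderiv_apply_apply {K : (ι → ℝ) → ι → ℝ} {x : ι → ℝ}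
    (hK : DifferentiableAt ℝ (fderiv ℝ K) x) (v : ι → ℝ) (i : ι) :
    HasFDerivAt (fun y => fderiv ℝ K y v i)
      (((ContinuousLinearMap.proj i).comp (ContinuousLinearMap.apply ℝ (ι → ℝ) v)).comp
        (fderiv ℝ (fderiv ℝ K) x)) x :=
  ((ContinuousLinearMap.proj i).comp
    (ContinuousLinearMap.apply ℝ (ι → ℝ) v)).hasFDerivAt.comp x hK.hasFDerivAt

variable [DecidableEq ι]

noncomputable def jacobian (K : (ι → ℝ) → ι → ℝ) (x : ι → ℝ) : Matrix ι ι ℝ :=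
  LinearMap.toMatrix' (fderiv ℝ K x : (ι → ℝ) →ₗ[ℝ] ι → ℝ)

theorem jacobian_apply (K : (ι → ℝ) → ι → ℝ) (x : ι → ℝ) (i j : ι) :
    jacobian K x i j = fderiv ℝ K x (Pi.single j 1) i :=
  LinearMap.toMatrix'_apply _ i j

theorem jacobian_mulVec (K : (ι → ℝ) → ι → ℝ) (x v : ι → ℝ) :
    jacobian K x *ᵥ v = fderiv ℝ K x v :=
  LinearMap.toMatrix'_mulVec _ v

theorem jacobian_const_add_mulVec (c : ι → ℝ) (B : Matrix ι ι ℝ) (x : ι → ℝ) :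
    jacobian (fun y => c + B *ᵥ y) x = B := by
  have hB : HasFDerivAt (fun y => c + B *ᵥ y) (LinearMap.toContinuousLinearMap (Matrix.toLin' B)) x :=
    (LinearMap.toContinuousLinearMap (Matrix.toLin' B)).hasFDerivAt.const_add c
  rw [jacobian, hB.fderiv]
  exact LinearMap.toMatrix'_toLin' B

theorem pderiv'_eq_jacobian {n : ℕ} {K : (Fin n → ℝ) → Fin n → ℝ} {x : Fin n → ℝ}
    (hK : DifferentiableAt ℝ K x) (i j : Fin n) :
    pderiv' j (fun y => K y i) x = jacobian K x i j := by
  have hKi : HasFDerivAt (fun y => K y i) ((ContinuousLinearMap.proj i).comp (fderiv ℝ K x)) x :=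
    (ContinuousLinearMap.proj (R := ℝ) (φ := fun _ : Fin n => ℝ) i).hasFDerivAt.comp x
      hK.hasFDerivAt
  rw [pderiv', hKi.fderiv, jacobian_apply]
  rfl

theorem fderiv_eq_of_jacobian_antisymm {K : (ι → ℝ) → ι → ℝ} (hK : ContDiff ℝ 2 K)
    (hanti : ∀ y, (jacobian K y)ᵀ = -jacobian K y) (x y : ι → ℝ) :
    fderiv ℝ K x = fderiv ℝ K y := by
  have hK' : Differentiable ℝ (fderiv ℝ K) :=
    (hK.fderiv_right (m := 1) le_rfl).differentiable one_ne_zero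
  refine is_const_of_fderiv_eq_zero hK' (fun z => ?_) x y
  set T : ι → ι → ι → ℝ := fun i p q => fderiv ℝ (fderiv ℝ K) z (Pi.single p 1) (Pi.single q 1) i
  have hsymm : ∀ i p q, T i p q = T i q p := fun i p q =>
    congrFun (hK.contDiffAt.isSymmSndFDerivAt (by simp) _ _) i
  have hskew : ∀ i p q, T i p q = -T q p i := by
    intro i p q
    have hfun : (fun w => fderiv ℝ K w (Pi.single q 1) i) =
        fun w => -fderiv ℝ K w (Pi.single i 1) q := by
      funext w
      simpa [jacobian_apply] using congrFun (congrFun (hanti w) q) i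
    have hneg := (hasFDerivAt_fderiv_apply_apply (hK' z) (Pi.single i 1) q).fun_neg
    rw [← hfun] at hneg
    have h := (hasFDerivAt_fderiv_apply_apply (hK' z) (Pi.single q 1) i).unique hneg
    exact congrArg (· (Pi.single p 1)) h
  refine ContinuousLinearMap.ext_single fun p => ContinuousLinearMap.ext_single fun q => ?_
  funext i
  exact eq_zero_of_symm_of_antisymm hsymm hskew i p q

end Jacobian

/-- A `C³` map `K : ℝⁿ → ℝⁿ` satisfies the Killing equation for the Euclidean metric
if and only if `K x = c + B x` for some vector `c` and some antisymmetric matrix `B`: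
all infinitesimal isometries of the Euclidean metric are translations and
infinitesimal rotations. -/
theorem killing_iff_affine_antisymm (n : ℕ) (K : (Fin n → ℝ) → (Fin n → ℝ))
    (hK : ContDiff ℝ 3 K) :
    (∀ (x : Fin n → ℝ) (i j : Fin n),
        pderiv' j (fun y => K y i) x + pderiv' i (fun y => K y j) x = 0) ↔
      ∃ (c : Fin n → ℝ) (B : Matrix (Fin n) (Fin n) ℝ),
        B.transpose = -B ∧ ∀ x : Fin n → ℝ, K x = c + B.mulVec x := by
  have hK1 : Differentiable ℝ K := hK.differentiable (by norm_num)
  simp only [pderiv'_eq_jacobian (hK1 _), ← Matrix.transpose_eq_neg_iff]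
  constructor
  · intro hanti
    have hconst : ∀ x, fderiv ℝ K x = fderiv ℝ K 0 :=
      fun x => fderiv_eq_of_jacobian_antisymm (hK.of_le (by norm_num)) hanti x 0
    refine ⟨K 0, jacobian K 0, hanti 0, fun x => ?_⟩
    rw [jacobian_mulVec]
    exact eq_add_of_fderiv_eq hK1 hconst x
  · rintro ⟨c, B, hB, hKB⟩ x
    obtain rfl : K = fun y => c + B *ᵥ y := funext hKB
    rwa [jacobian_const_add_mulVec]
end

section
/- For every natural number n, the real vector space of all C^∞ maps K : ℝⁿ → ℝⁿ satisfying the Killing equation for the Euclidean metric (∂K^i/∂x^j + ∂K^j/∂x^i = 0 everywhere) is finite-dimensional, of dimension at most n + n(n−1)/2 = n(n+1)/2. -/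
section helpers
variable {n : ℕ}

lemma clm_ext {l m : (Fin n → ℝ) →L[ℝ] ℝ}
    (h : ∀ j, l (Pi.single j 1) = m (Pi.single j 1)) : l = m := by
  apply ContinuousLinearMap.coe_injective
  exact (Pi.basisFun ℝ (Fin n)).ext (by simpa [Pi.basisFun_apply] using h)

lemma pderiv'_contDiff {f : (Fin n → ℝ) → ℝ} (hf : ContDiff ℝ (⊤ : ℕ∞) f) (j : Fin n) :
    ContDiff ℝ (⊤ : ℕ∞) (pderiv' j f) :=
  (hf.fderiv_right (by simp)).clm_apply contDiff_const

lemma pderiv'_pderiv' {f : (Fin n → ℝ) → ℝ} (hf : ContDiff ℝ (⊤ : ℕ∞) f) (j k : Fin n) (x : Fin n → ℝ) :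
    pderiv' k (pderiv' j f) x = fderiv ℝ (fderiv ℝ f) x (Pi.single k 1) (Pi.single j 1) := by
  have hdf : Differentiable ℝ (fderiv ℝ f) := (hf.fderiv_right (m := 1) (WithTop.coe_le_coe.2 le_top)).differentiable one_ne_zero
  unfold pderiv'
  rw [show (fun y => fderiv ℝ f y (Pi.single j 1)) =
      (ContinuousLinearMap.apply ℝ ℝ (Pi.single j 1 : Fin n → ℝ)) ∘ (fderiv ℝ f) from rfl,
    fderiv_comp x (ContinuousLinearMap.apply ℝ ℝ _).differentiableAt (hdf x)]
  simp

lemma schwarz {f : (Fin n → ℝ) → ℝ} (hf : ContDiff ℝ (⊤ : ℕ∞) f) (j k : Fin n) (x : Fin n → ℝ) :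
    pderiv' k (pderiv' j f) x = pderiv' j (pderiv' k f) x := by
  rw [pderiv'_pderiv' hf, pderiv'_pderiv' hf]
  exact second_derivative_symmetric (fun y => (hf.differentiable (by simp) y).hasFDerivAt)
    (((hf.fderiv_right (m := 1) (WithTop.coe_le_coe.2 le_top)).differentiable one_ne_zero x).hasFDerivAt) _ _

lemma const_of_pderiv'_zero {f : (Fin n → ℝ) → ℝ} (hf : Differentiable ℝ f)
    (h : ∀ (x : Fin n → ℝ) (j : Fin n), pderiv' j f x = 0) (x : Fin n → ℝ) : f x = f 0 := by
  apply is_const_of_fderiv_eq_zero hf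
  intro y
  exact clm_ext (fun j => by simpa [pderiv'] using h y j)

end helpers

section killing
variable {n : ℕ} {K : (Fin n → ℝ) → (Fin n → ℝ)}

lemma pderiv'_neg {g : (Fin n → ℝ) → ℝ} (k : Fin n) (x : Fin n → ℝ) :
    pderiv' k (fun y => -(g y)) x = -pderiv' k g x := by
  unfold pderiv'; rw [fderiv_fun_neg]; simp

lemma killing_snd_zero (hK : ContDiff ℝ (⊤ : ℕ∞) K)
    (hkill : ∀ (x : Fin n → ℝ) (i j : Fin n),
      pderiv' j (fun y => K y i) x + pderiv' i (fun y => K y j) x = 0)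
    (x : Fin n → ℝ) (i j k : Fin n) :
    pderiv' k (pderiv' j (fun y => K y i)) x = 0 := by
  have hc : ∀ i : Fin n, ContDiff ℝ (⊤ : ℕ∞) (fun y => K y i) := fun i =>
    (contDiff_pi.1 hK i)
  set T : Fin n → Fin n → Fin n → ℝ := fun i j k =>
    pderiv' k (pderiv' j (fun y => K y i)) x with hT
  have ha : ∀ i j k, T i j k = T i k j := fun i j k => schwarz (hc i) j k x
  have hb : ∀ i j k, T i j k = -T j i k := by
    intro i j k
    have : pderiv' j (fun y => K y i) = fun y => -(pderiv' i (fun y => K y j) y) := by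
      funext y
      exact eq_neg_of_add_eq_zero_left (hkill y i j)
    simp only [hT, this, pderiv'_neg]
  have : T i j k = -T i j k := by
    calc T i j k = T i k j := ha i j k
    _ = -T k i j := hb i k j
    _ = -T k j i := by rw [ha k i j]
    _ = T j k i := by rw [hb j k i]
    _ = T j i k := ha j k i
    _ = -T i j k := hb j i k
  linarith

lemma killing_pderiv_const (hK : ContDiff ℝ (⊤ : ℕ∞) K)
    (hkill : ∀ (x : Fin n → ℝ) (i j : Fin n),
      pderiv' j (fun y => K y i) x + pderiv' i (fun y => K y j) x = 0)
    (x : Fin n → ℝ) (i j : Fin n) :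
    pderiv' j (fun y => K y i) x = pderiv' j (fun y => K y i) 0 :=
  const_of_pderiv'_zero
    ((pderiv'_contDiff (contDiff_pi.1 hK i) j).differentiable (by simp))
    (fun y k => killing_snd_zero hK hkill y i j k) x

lemma killing_zero (hK : ContDiff ℝ (⊤ : ℕ∞) K)
    (hkill : ∀ (x : Fin n → ℝ) (i j : Fin n),
      pderiv' j (fun y => K y i) x + pderiv' i (fun y => K y j) x = 0)
    (h0 : K 0 = 0)
    (hupper : ∀ i j : Fin n, i < j → pderiv' j (fun y => K y i) 0 = 0) :
    K = 0 := by
  have hall : ∀ i j : Fin n, pderiv' j (fun y => K y i) 0 = 0 := by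
    intro i j
    rcases lt_trichotomy i j with h | h | h
    · exact hupper i j h
    · subst h
      have := hkill 0 i i
      linarith
    · have := hkill 0 i j
      rw [hupper j i h] at this
      linarith
  funext x
  funext i
  have hx : K x i = K 0 i :=
    const_of_pderiv'_zero ((contDiff_pi.1 hK i).differentiable (by simp))
      (fun y j => by rw [killing_pderiv_const hK hkill y i j]; exact hall i j) x
  rw [hx, h0]; rfl

end killing

section count
lemma card_lt_pairs (n : ℕ) :
    Fintype.card {p : Fin n × Fin n // p.1 < p.2} = n * (n - 1) / 2 := by
  have e : {p : Fin n × Fin n // p.1 < p.2} ≃ Σ j : Fin n, Fin j.val :=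
    { toFun := fun p => ⟨p.1.2, ⟨p.1.1.val, p.2⟩⟩
      invFun := fun s => ⟨(⟨s.2.val, s.2.isLt.trans s.1.isLt⟩, s.1), s.2.isLt⟩
      left_inv := fun p => rfl
      right_inv := fun s => rfl }
  rw [Fintype.card_congr e, Fintype.card_sigma]
  simp only [Fintype.card_fin]
  have h1 : ∑ x : Fin n, (x : ℕ) = ∑ i ∈ Finset.range n, i :=
    Fin.sum_univ_eq_sum_range (fun i => i) n
  have := Finset.sum_range_id_mul_two n
  omega
end count

section main
variable {n : ℕ}

lemma pderiv'_add {f g : (Fin n → ℝ) → ℝ} {x : Fin n → ℝ} (hf : DifferentiableAt ℝ f x)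
    (hg : DifferentiableAt ℝ g x) (j : Fin n) :
    pderiv' j (fun y => f y + g y) x = pderiv' j f x + pderiv' j g x := by
  unfold pderiv'; rw [fderiv_fun_add hf hg]; simp

lemma pderiv'_smul {f : (Fin n → ℝ) → ℝ} {x : Fin n → ℝ} (c : ℝ)
    (hf : DifferentiableAt ℝ f x) (j : Fin n) :
    pderiv' j (fun y => c • f y) x = c * pderiv' j f x := by
  unfold pderiv'; rw [fderiv_fun_const_smul hf]; simp

noncomputable def killingSpace (n : ℕ) : Submodule ℝ ((Fin n → ℝ) → (Fin n → ℝ)) where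
  carrier := {K | ContDiff ℝ (⊤ : ℕ∞) K ∧ ∀ (x : Fin n → ℝ) (i j : Fin n),
    pderiv' j (fun y => K y i) x + pderiv' i (fun y => K y j) x = 0}
  zero_mem' := by
    refine ⟨contDiff_const, fun x i j => ?_⟩
    have : ∀ i : Fin n, (fun y : Fin n → ℝ => (0 : (Fin n → ℝ) → (Fin n → ℝ)) y i)
        = fun _ => (0 : ℝ) := fun i => rfl
    simp [pderiv', this]
  add_mem' := by
    rintro K L ⟨hK, hK2⟩ ⟨hL, hL2⟩
    refine ⟨hK.add hL, fun x i j => ?_⟩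
    have dK : ∀ (i : Fin n), DifferentiableAt ℝ (fun y => K y i) x := fun i =>
      ((contDiff_pi.1 hK i).differentiable (by simp)) x
    have dL : ∀ (i : Fin n), DifferentiableAt ℝ (fun y => L y i) x := fun i =>
      ((contDiff_pi.1 hL i).differentiable (by simp)) x
    have h1 : ∀ i j : Fin n, pderiv' j (fun y => (K + L) y i) x
        = pderiv' j (fun y => K y i) x + pderiv' j (fun y => L y i) x := fun i j =>
      pderiv'_add (dK i) (dL i) j
    rw [h1, h1]
    have := hK2 x i j
    have := hL2 x i j
    linarith
  smul_mem' := by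
    rintro c K ⟨hK, hK2⟩
    refine ⟨hK.const_smul c, fun x i j => ?_⟩
    have dK : ∀ (i : Fin n), DifferentiableAt ℝ (fun y => K y i) x := fun i =>
      ((contDiff_pi.1 hK i).differentiable (by simp)) x
    have h1 : ∀ i j : Fin n, pderiv' j (fun y => (c • K) y i) x
        = c * pderiv' j (fun y => K y i) x := fun i j => pderiv'_smul c (dK i) j
    rw [h1, h1, ← mul_add, hK2 x i j, mul_zero]


/-- The space of smooth Killing vector fields of the Euclidean metric on `ℝⁿ` is a
finite-dimensional real vector space, of dimension at most `n(n+1)/2`. -/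
theorem killing_fields_finiteDimensional (n : ℕ) :
    ∃ V : Submodule ℝ ((Fin n → ℝ) → (Fin n → ℝ)),
      (∀ K : (Fin n → ℝ) → (Fin n → ℝ),
        K ∈ V ↔ (ContDiff ℝ (⊤ : ℕ∞) K ∧ ∀ (x : Fin n → ℝ) (i j : Fin n),
          pderiv' j (fun y => K y i) x + pderiv' i (fun y => K y j) x = 0)) ∧
      FiniteDimensional ℝ V ∧ Module.finrank ℝ V ≤ n * (n + 1) / 2 := by
  classical
  let Φ : killingSpace n →ₗ[ℝ] (Fin n → ℝ) × ({p : Fin n × Fin n // p.1 < p.2} → ℝ) :=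
    { toFun := fun K => (K.1 0, fun p => pderiv' p.1.2 (fun y => K.1 y p.1.1) 0)
      map_add' := fun K L => by
        have hK := K.2.1
        have hL := L.2.1
        have dK : ∀ i : Fin n, DifferentiableAt ℝ (fun y => K.1 y i) 0 :=
          fun i => ((contDiff_pi.1 hK i).differentiable (by simp)) 0
        have dL : ∀ i : Fin n, DifferentiableAt ℝ (fun y => L.1 y i) 0 :=
          fun i => ((contDiff_pi.1 hL i).differentiable (by simp)) 0
        refine Prod.ext rfl ?_
        funext p
        exact pderiv'_add (dK p.1.1) (dL p.1.1) p.1.2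
      map_smul' := fun c K => by
        have hK := K.2.1
        have dK : ∀ i : Fin n, DifferentiableAt ℝ (fun y => K.1 y i) 0 :=
          fun i => ((contDiff_pi.1 hK i).differentiable (by simp)) 0
        refine Prod.ext rfl ?_
        funext p
        exact pderiv'_smul c (dK p.1.1) p.1.2 }
  have hker : ∀ K : killingSpace n, Φ K = 0 → K = 0 := by
    intro K h
    have h0 : K.1 0 = 0 := congrArg Prod.fst h
    have hup : ∀ p : {p : Fin n × Fin n // p.1 < p.2},
        pderiv' p.1.2 (fun y => K.1 y p.1.1) 0 = 0 :=
      fun p => congrFun (congrArg Prod.snd h) p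
    have hz : K.1 = 0 := killing_zero K.2.1 K.2.2 h0 (fun i j hij => hup ⟨(i, j), hij⟩)
    exact Subtype.ext hz
  have hinj : Function.Injective Φ := by
    rw [← LinearMap.ker_eq_bot]
    exact LinearMap.ker_eq_bot'.2 hker
  have hfd : FiniteDimensional ℝ (killingSpace n) := FiniteDimensional.of_injective Φ hinj
  refine ⟨killingSpace n, fun K => Iff.rfl, hfd, ?_⟩
  have hle := LinearMap.finrank_le_finrank_of_injective hinj
  have hcod : Module.finrank ℝ ((Fin n → ℝ) × ({p : Fin n × Fin n // p.1 < p.2} → ℝ))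
      = n + n * (n - 1) / 2 := by
    rw [Module.finrank_prod, Module.finrank_pi, Module.finrank_pi, Fintype.card_fin,
      card_lt_pairs]
  rw [hcod] at hle
  refine hle.trans ?_
  obtain ⟨k, hk⟩ : Even (n * (n - 1)) := by
    rcases n with _ | m
    · simp
    · simpa [Nat.mul_comm] using Nat.even_mul_succ_self m
  have hmul : n * (n + 1) = n * (n - 1) + 2 * n := by
    rcases n with _ | m
    · simp
    · simp [Nat.succ_sub_one]; ring
  omega
end main
end

section
/- Let n be a positive natural number, k a natural number, and J the standard symplectic matrix on ℝ^{2n}. Let L : (Fin (k+2) → Fin (2n)) → ℝ be a totally symmetric array, i.e. L(v ∘ σ) = L(v) for every permutation σ of Fin (k+2). For each choice of indices m = (m₁,…,m_k) define the 2n×2n matrix B_m by (B_m)^i_j := Σ_r L(m₁,…,m_k, j, r) · (J⁻¹)_{r i}. Then for every m, the matrix B_m belongs to the symplectic Lie algebra sp(2n, ℝ); equivalently, the matrix J · B_m is symmetric. In other words, every totally symmetric rank k+2 tensor defines an element of the k-th Cartan prolongation of sp(2n, ℝ), so all Cartan prolongations of the symplectic Lie algebra are non-trivial. -/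
open Matrix


/-- The standard symplectic matrix `J = [[0, Iₙ], [-Iₙ, 0]]` on `ℝ^{2n}`. -/
def Jstd (n : ℕ) : Matrix (Fin (2 * n)) (Fin (2 * n)) ℝ := fun i j =>
  if (i : ℕ) + n = (j : ℕ) then 1 else if (j : ℕ) + n = (i : ℕ) then -1 else 0

lemma Jstd_mul_Jstd (n : ℕ) : Jstd n * Jstd n = -1 := by
  ext i j
  simp only [Matrix.mul_apply, Matrix.neg_apply, Matrix.one_apply, Jstd]
  have hi2 := i.isLt
  have hj2 := j.isLt
  rcases lt_or_ge (i : ℕ) n with hi | hi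
  · have h2 : (i : ℕ) + n < 2 * n := by omega
    rw [Finset.sum_eq_single (⟨(i:ℕ)+n, h2⟩ : Fin (2*n))]
    · simp only [Fin.val_mk]
      split_ifs <;> simp_all <;> omega
    · intro b _ hb
      have h1 : (i:ℕ)+n ≠ (b:ℕ) := fun h => hb (Fin.ext h.symm)
      have hb2 : (b:ℕ) + n ≠ (i:ℕ) := by omega
      split_ifs <;> simp_all
    · intro h; exact absurd (Finset.mem_univ _) h
  · have h2 : (i : ℕ) - n < 2 * n := by omega
    rw [Finset.sum_eq_single (⟨(i:ℕ)-n, h2⟩ : Fin (2*n))]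
    · simp only [Fin.val_mk]
      split_ifs <;> simp_all <;> omega
    · intro b _ hb
      have h1 : (i:ℕ) - n ≠ (b:ℕ) := fun h => hb (Fin.ext h.symm)
      have hb1 : (i:ℕ)+n ≠ (b:ℕ) := by omega
      have hb2 : (b:ℕ) + n ≠ (i:ℕ) := by omega
      split_ifs <;> simp_all
    · intro h; exact absurd (Finset.mem_univ _) h

lemma Jstd_transpose (n : ℕ) : (Jstd n)ᵀ = -Jstd n := by
  ext i j
  have hi2 := i.isLt
  have hj2 := j.isLt
  simp only [Matrix.transpose_apply, Matrix.neg_apply, Jstd]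
  split_ifs <;> simp_all <;> omega

lemma Jstd_inv (n : ℕ) : (Jstd n)⁻¹ = -Jstd n :=
  Matrix.inv_eq_right_inv (by rw [Matrix.mul_neg, Jstd_mul_Jstd, neg_neg])

lemma Jstd_mul_transpose (n : ℕ) (i r : Fin (2 * n)) :
    ∑ p, Jstd n i p * Jstd n r p = if i = r then (1:ℝ) else 0 := by
  have h : Jstd n * (Jstd n)ᵀ = 1 := by
    rw [Jstd_transpose, Matrix.mul_neg, Jstd_mul_Jstd, neg_neg]
  have := congrFun (congrFun h i) r
  simpa [Matrix.mul_apply, Matrix.transpose_apply, Matrix.one_apply] using this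

/-- Every totally symmetric rank `k+2` tensor `L` on `ℝ^{2n}` defines an element of the
`k`-th Cartan prolongation of the symplectic Lie algebra `sp(2n, ℝ)`: for each choice of
indices `m₁, …, m_k`, the matrix `(B_m)^i_j = Σ_r L(m₁,…,m_k,j,r) (J⁻¹)_{r i}` satisfies
`B_mᵀ J + J B_m = 0`, i.e. `J B_m` is symmetric. Hence all Cartan prolongations of the
symplectic Lie algebra are non-trivial. -/
theorem symmetric_tensor_in_symplectic_prolongation (n k : ℕ) (hn : 0 < n)
    (L : (Fin (k + 2) → Fin (2 * n)) → ℝ)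
    (hsymL : ∀ (v : Fin (k + 2) → Fin (2 * n)) (σ : Equiv.Perm (Fin (k + 2))),
      L (v ∘ σ) = L v) :
    ∀ (m : Fin k → Fin (2 * n)) (B : Matrix (Fin (2 * n)) (Fin (2 * n)) ℝ),
      (∀ i j, B i j = ∑ r, L (Fin.snoc (Fin.snoc m j) r) * (Jstd n)⁻¹ r i) →
        B.transpose * Jstd n + Jstd n * B = 0 ∧ (Jstd n * B).IsSymm := by
  intro m B hB
  -- symmetry of L in the last two slots
  have hswap : ∀ (i j : Fin (2 * n)),
      L (Fin.snoc (Fin.snoc m j) i) = L (Fin.snoc (Fin.snoc m i) j) := by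
    intro i j
    have key := hsymL (Fin.snoc (Fin.snoc m i) j)
      (Equiv.swap (Fin.castSucc (Fin.last k)) (Fin.last (k+1)))
    rw [← key]
    congr 1
    funext p
    induction p using Fin.lastCases with
    | last =>
      simp [Function.comp, Equiv.swap_apply_right, Fin.snoc_last, Fin.snoc_castSucc]
    | cast q =>
      induction q using Fin.lastCases with
      | last =>
        simp [Function.comp, Equiv.swap_apply_left, Fin.snoc_last, Fin.snoc_castSucc]
      | cast q' =>
        have h1 : Fin.castSucc (Fin.castSucc q') ≠ Fin.castSucc (Fin.last k) := by
          simp [Fin.ext_iff]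
          omega
        have h2 : Fin.castSucc (Fin.castSucc q') ≠ Fin.last (k+1) := by
          simp [Fin.ext_iff]
          omega
        simp [Function.comp, Equiv.swap_apply_of_ne_of_ne h1 h2, Fin.snoc_castSucc]
  -- entrywise formula for J * B
  have hJB : ∀ i j, (Jstd n * B) i j = - L (Fin.snoc (Fin.snoc m j) i) := by
    intro i j
    rw [Matrix.mul_apply]
    have step : ∀ p, Jstd n i p * B p j
        = ∑ r, (- L (Fin.snoc (Fin.snoc m j) r)) * (Jstd n i p * Jstd n r p) := by
      intro p
      rw [hB, Finset.mul_sum]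
      refine Finset.sum_congr rfl fun r _ => ?_
      rw [Jstd_inv]
      simp only [Matrix.neg_apply]
      ring
    calc ∑ p, Jstd n i p * B p j
        = ∑ p, ∑ r, (- L (Fin.snoc (Fin.snoc m j) r)) * (Jstd n i p * Jstd n r p) :=
          Finset.sum_congr rfl fun p _ => step p
      _ = ∑ r, (- L (Fin.snoc (Fin.snoc m j) r)) * ∑ p, Jstd n i p * Jstd n r p := by
          rw [Finset.sum_comm]
          exact Finset.sum_congr rfl fun r _ => (Finset.mul_sum _ _ _).symm
      _ = - L (Fin.snoc (Fin.snoc m j) i) := by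
          simp [Jstd_mul_transpose, mul_ite, mul_one, mul_zero, Finset.sum_ite_eq]
  have hsym : (Jstd n * B).IsSymm := by
    rw [Matrix.IsSymm]
    ext i j
    rw [Matrix.transpose_apply, hJB, hJB, hswap]
  refine ⟨?_, hsym⟩
  have hBtJ : B.transpose * Jstd n = - (Jstd n * B) := by
    have h1 : B.transpose * Jstd n = ((Jstd n)ᵀ * B)ᵀ := by
      rw [Matrix.transpose_mul, Matrix.transpose_transpose]
    rw [h1, Jstd_transpose, Matrix.neg_mul, Matrix.transpose_neg, hsym.eq]
  rw [hBtJ]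
  exact neg_add_cancel _
end

section
/- Let ι be a finite type with a parity function p : ι → ZMod 2, let ε ∈ ZMod 2 and σ ∈ {1, −1}. Let L be an invertible ι×ι matrix over ℝ which is parity-homogeneous of parity ε (L A B = 0 whenever p A + p B ≠ ε) and satisfies the super-symmetry condition L A B = σ · (−1)^{p A · p B} · L B A for all A, B. Then the inverse matrix satisfies the opposite symmetry with respect to shifted parity: L⁻¹ A B = −σ · (−1)^{(p A + 1)(p B + 1) + ε} · L⁻¹ B A for all A, B. (Here exponents of −1 are computed from representatives in {0,1} of the ZMod 2 values.) -/
/-!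
When `2 ≠ 0`, a matrix has parity `ε` iff it intertwines the sign matrices `diag((-1)^{p A})`
and `diag((-1)^{p A + ε})`; these are involutions, so inverting just swaps them and the inverse
again has parity `ε`. On entries of such a matrix `p A + p B = ε`, so the
super-symmetry sign `(-1)^{p A · p B}` only depends on `A`: it equals `(-1)^{(1 + ε) p A}`.
Hence super-symmetry reads `L = D Lᵀ` for the involutive diagonal matrix
`D = σ diag((-1)^{(1 + ε) p A})`, which commutes with every matrix of parity `ε`; inverting gives
`L⁻¹ = (L⁻¹)ᵀ D = D (L⁻¹)ᵀ`, so `L⁻¹` has the same super-symmetry as `L`. Finally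
`(p A + 1)(p B + 1) + ε ≡ p A · p B + 1 (mod 2)` on the entries of parity `ε`.
-/

theorem neg_one_pow_eq_of_natCast_eq {R : Type*} [Ring R] {m n : ℕ}
    (h : (m : ZMod 2) = n) : (-1 : R) ^ m = (-1) ^ n := by
  rw [neg_one_pow_eq_pow_mod_two, neg_one_pow_eq_pow_mod_two (n := n),
    (ZMod.natCast_eq_natCast_iff' m n 2).1 h]

namespace ZMod

variable {R : Type*} [Ring R] {a b e : ZMod 2}

theorem neg_one_pow_val_of_ne (h : a ≠ b) : (-1 : R) ^ a.val = -(-1) ^ b.val := by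
  rw [← neg_one_mul ((-1 : R) ^ b.val), ← pow_succ']
  apply neg_one_pow_eq_of_natCast_eq
  push_cast [ZMod.natCast_zmod_val]
  revert a b; decide

theorem neg_one_pow_val_mul_val_of_add_eq (h : a + b = e) :
    (-1 : R) ^ (a.val * b.val) = (-1) ^ ((1 + e) * a).val := by
  apply neg_one_pow_eq_of_natCast_eq
  push_cast [ZMod.natCast_zmod_val]
  subst h; revert a b; decide

theorem neg_one_pow_shifted_of_add_eq (h : a + b = e) :
    (-1 : R) ^ ((a.val + 1) * (b.val + 1) + e.val) = -(-1) ^ (a.val * b.val) := by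
  rw [← neg_one_mul ((-1 : R) ^ (a.val * b.val)), ← pow_succ']
  apply neg_one_pow_eq_of_natCast_eq
  push_cast [ZMod.natCast_zmod_val]
  subst h; revert a b; decide

end ZMod

namespace Matrix

variable {ι R : Type*} {p : ι → ZMod 2} {ε : ZMod 2}

def signDiagonal [DecidableEq ι] [Ring R] (f : ι → ZMod 2) : Matrix ι ι R :=
  diagonal fun i => (-1) ^ (f i).val

def IsParityHomogeneous [Zero R] (p : ι → ZMod 2) (ε : ZMod 2) (M : Matrix ι ι R) : Prop :=
  ∀ A B, p A + p B ≠ ε → M A B = 0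

def IsSuperSymmetric [Ring R] (p : ι → ZMod 2) (σ : R) (M : Matrix ι ι R) : Prop :=
  ∀ A B, M A B = σ * (-1) ^ ((p A).val * (p B).val) * M B A

theorem IsParityHomogeneous.transpose [Zero R] {M : Matrix ι ι R}
    (hM : M.IsParityHomogeneous p ε) : Mᵀ.IsParityHomogeneous p ε :=
  fun A B hAB => hM B A (by rwa [add_comm])

variable [Fintype ι] [DecidableEq ι]

theorem mul_inv_eq_inv_mul_of_mul_eq_mul [CommRing R] {D D' M : Matrix ι ι R}
    (hD : D * D = 1) (hD' : D' * D' = 1) (h : D * M = M * D') : D' * M⁻¹ = M⁻¹ * D := by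
  have hM : M = D * M * D' := by rw [h, mul_assoc, hD', mul_one]
  have hinv : M⁻¹ = D' * M⁻¹ * D := by
    conv_lhs => rw [hM]
    rw [mul_inv_rev, mul_inv_rev, inv_eq_left_inv hD, inv_eq_left_inv hD', mul_assoc]
  conv_lhs => rw [hinv]
  rw [← mul_assoc, ← mul_assoc, hD', one_mul]

theorem signDiagonal_mul_self [Ring R] (f : ι → ZMod 2) :
    signDiagonal f * signDiagonal f = (1 : Matrix ι ι R) := by
  simp [signDiagonal, ← pow_add, ← two_mul, pow_mul]

theorem signDiagonal_mul_eq_mul_signDiagonal [Ring R] {f g : ι → ZMod 2} {M : Matrix ι ι R}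
    (h : ∀ A B, f A ≠ g B → M A B = 0) : signDiagonal f * M = M * signDiagonal g := by
  ext A B
  by_cases hAB : f A = g B
  · simp [signDiagonal, hAB, ((Commute.neg_one_left _).pow_left _).eq]
  · simp [signDiagonal, h A B hAB]

theorem apply_eq_zero_of_signDiagonal_mul_eq [CommRing R] [NoZeroDivisors R] [NeZero (2 : R)]
    {f g : ι → ZMod 2} {M : Matrix ι ι R} (h : signDiagonal f * M = M * signDiagonal g)
    {A B : ι} (hAB : f A ≠ g B) : M A B = 0 := by
  have hentry := congr_fun₂ h A B
  simp only [signDiagonal, diagonal_mul, mul_diagonal, ZMod.neg_one_pow_val_of_ne hAB] at hentry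
  have hsq : (-1 : R) ^ (g B).val * (-1) ^ (g B).val = 1 := by
    rw [← mul_pow, neg_one_mul, neg_neg, one_pow]
  have htwice : 2 * M A B = 0 := by
    linear_combination (-(-1 : R) ^ (g B).val) * hentry - 2 * M A B * hsq
  exact (mul_eq_zero.1 htwice).resolve_left two_ne_zero

theorem IsParityHomogeneous.inv [CommRing R] [NoZeroDivisors R] [NeZero (2 : R)]
    {M : Matrix ι ι R} (hM : M.IsParityHomogeneous p ε) : M⁻¹.IsParityHomogeneous p ε := by
  have hM' : signDiagonal p * M = M * signDiagonal (fun B => p B + ε) :=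
    signDiagonal_mul_eq_mul_signDiagonal fun A B hAB => hM A B (by grind)
  have hinv := mul_inv_eq_inv_mul_of_mul_eq_mul (signDiagonal_mul_self _)
    (signDiagonal_mul_self _) hM'
  exact fun A B hAB => apply_eq_zero_of_signDiagonal_mul_eq hinv (by grind)

theorem IsParityHomogeneous.commute_signDiagonal [Ring R] {M : Matrix ι ι R}
    (hM : M.IsParityHomogeneous p ε) : Commute (signDiagonal fun A => (1 + ε) * p A) M := by
  refine signDiagonal_mul_eq_mul_signDiagonal fun A B hAB => hM A B ?_
  contrapose! hAB
  subst hAB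
  generalize p A = a, p B = b
  revert a b; decide

theorem IsParityHomogeneous.isSuperSymmetric_iff [Ring R] {M : Matrix ι ι R} {σ : R}
    (hM : M.IsParityHomogeneous p ε) :
    M.IsSuperSymmetric p σ ↔ M = (σ • signDiagonal fun A => (1 + ε) * p A) * Mᵀ := by
  have hsign : ∀ A B, σ * (-1) ^ ((p A).val * (p B).val) * M B A
      = σ * (-1) ^ ((1 + ε) * p A).val * M B A := by
    intro A B
    by_cases hAB : p A + p B = ε
    · rw [ZMod.neg_one_pow_val_mul_val_of_add_eq hAB]
    · rw [hM B A (by rwa [add_comm]), mul_zero, mul_zero]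
  simp only [IsSuperSymmetric, hsign, ← Matrix.ext_iff, smul_mul, smul_apply, signDiagonal,
    diagonal_mul, transpose_apply, smul_eq_mul, mul_assoc]

theorem IsSuperSymmetric.inv [CommRing R] [NoZeroDivisors R] [NeZero (2 : R)] {σ : R}
    {M : Matrix ι ι R} (hM : M.IsParityHomogeneous p ε) (hσ : σ * σ = 1)
    (h : M.IsSuperSymmetric p σ) : M⁻¹.IsSuperSymmetric p σ := by
  set D : Matrix ι ι R := σ • signDiagonal fun A => (1 + ε) * p A
  have hD : D * D = 1 := by rw [smul_mul_smul_comm, hσ, signDiagonal_mul_self, one_smul]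
  have hinv : M⁻¹ = M⁻¹ᵀ * D := by
    conv_lhs => rw [hM.isSuperSymmetric_iff.1 h]
    rw [mul_inv_rev, inv_eq_left_inv hD, transpose_nonsing_inv]
  have hcomm : Commute D M⁻¹ᵀ := hM.inv.transpose.commute_signDiagonal.smul_left σ
  exact hM.inv.isSuperSymmetric_iff.2 (hinv.trans hcomm.eq.symm)

end Matrix

theorem inverse_supersymmetry_shift_general
    (ι : Type*) [Fintype ι] [DecidableEq ι] (p : ι → ZMod 2) (ε : ZMod 2)
    (σ : ℝ) (hσ : σ = 1 ∨ σ = -1)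
    (L : Matrix ι ι ℝ)
    (hhom : ∀ A B, p A + p B ≠ ε → L A B = 0)
    (hsym : ∀ A B, L A B = σ * (-1 : ℝ) ^ ((p A).val * (p B).val) * L B A) :
    ∀ A B, L⁻¹ A B
      = -σ * (-1 : ℝ) ^ (((p A).val + 1) * ((p B).val + 1) + ε.val) * L⁻¹ B A := by
  have hσσ : σ * σ = 1 := by rcases hσ with rfl | rfl <;> norm_num
  have hhom_inv : L⁻¹.IsParityHomogeneous p ε := Matrix.IsParityHomogeneous.inv hhom
  have hsym_inv : L⁻¹.IsSuperSymmetric p σ := Matrix.IsSuperSymmetric.inv hhom hσσ hsym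
  intro A B
  by_cases hAB : p A + p B = ε
  · rw [hsym_inv A B, ZMod.neg_one_pow_shifted_of_add_eq hAB]
    ring
  · rw [hhom_inv A B hAB, hhom_inv B A (by rwa [add_comm]), mul_zero]

/-- Let `L` be an invertible real matrix indexed by a finite type with parity function
`p`, parity-homogeneous of parity `ε`, satisfying the super-symmetry condition
`L A B = σ (−1)^{p A · p B} L B A` (with `σ = ±1`). Then its inverse satisfies the
opposite symmetry with respect to shifted parity:
`L⁻¹ A B = −σ (−1)^{(p A + 1)(p B + 1) + ε} L⁻¹ B A`. -/
theorem inverse_supersymmetry_shift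
    (ι : Type*) [Fintype ι] [DecidableEq ι] (p : ι → ZMod 2) (ε : ZMod 2)
    (σ : ℝ) (hσ : σ = 1 ∨ σ = -1)
    (L : Matrix ι ι ℝ) (hL : IsUnit L.det)
    (hhom : ∀ A B, p A + p B ≠ ε → L A B = 0)
    (hsym : ∀ A B, L A B = σ * (-1 : ℝ) ^ ((p A).val * (p B).val) * L B A) :
    ∀ A B, L⁻¹ A B
      = -σ * (-1 : ℝ) ^ (((p A).val + 1) * ((p B).val + 1) + ε.val) * L⁻¹ B A :=
  inverse_supersymmetry_shift_general ι p ε σ hσ L hhom hsym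
end

section
/- Let ι be a finite type with a parity function p : ι → ZMod 2, and let L be an invertible ι×ι matrix over ℝ which is parity-homogeneous of odd parity (L A B = 0 whenever p A + p B ≠ 1) and supersymmetric: L A B = (−1)^{p A · p B} · L B A for all A, B. Define L̃ A B := (−1)^{p A} · L A B. Then L̃ is invertible and its inverse is antisymmetric with respect to the original parity: (L̃)⁻¹ A B = −(−1)^{p A · p B} · (L̃)⁻¹ B A for all A, B. In other words, the inverse of the parity shift of an odd non-degenerate symmetric tensor is an odd antisymmetric tensor with respect to the usual parity. -/
open Matrix in

/-- Let `L` be an invertible real matrix indexed by a finite type with parity function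
`p`, parity-homogeneous of odd parity (`L A B = 0` whenever `p A + p B ≠ 1`) and
supersymmetric (`L A B = (−1)^{p A · p B} L B A`). Then the parity shift
`L̃ A B = (−1)^{p A} L A B` is invertible and its inverse is antisymmetric with respect
to the original parity: `(L̃)⁻¹ A B = −(−1)^{p A · p B} (L̃)⁻¹ B A`. -/
theorem inverse_of_parity_shift_of_odd_symmetric_is_antisymmetric
    (ι : Type*) [Fintype ι] [DecidableEq ι] (p : ι → ZMod 2)
    (L : Matrix ι ι ℝ) (hL : IsUnit L.det)
    (hhom : ∀ A B, p A + p B ≠ 1 → L A B = 0)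
    (hsym : ∀ A B, L A B = (-1 : ℝ) ^ ((p A).val * (p B).val) * L B A)
    (Lt : Matrix ι ι ℝ)
    (hLt : ∀ A B, Lt A B = (-1 : ℝ) ^ (p A).val * L A B) :
    IsUnit Lt.det ∧
      ∀ A B, Lt⁻¹ A B = -(-1 : ℝ) ^ ((p A).val * (p B).val) * Lt⁻¹ B A := by
  classical
  have hzm : ∀ x : ZMod 2, x = 0 ∨ x = 1 := by decide
  have hv0 : (0 : ZMod 2).val = 0 := rfl
  have hv1 : (1 : ZMod 2).val = 1 := rfl
  set D : Matrix ι ι ℝ := Matrix.diagonal (fun A => (-1 : ℝ) ^ (p A).val) with hD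
  have hD2 : D * D = 1 := by
    rw [hD, Matrix.diagonal_mul_diagonal]
    convert Matrix.diagonal_one using 2
    ext A
    rw [← pow_add]
    exact (neg_one_pow_eq_one_iff_even (by norm_num)).2 (Even.add_self _)
  have hLt_eq : Lt = D * L := by
    ext A B
    rw [hD, Matrix.diagonal_mul, hLt]
  have hDunit : IsUnit D := ⟨⟨D, D, hD2, hD2⟩, rfl⟩
  have hDinv : D⁻¹ = D := Matrix.inv_eq_right_inv hD2
  have hdet : IsUnit Lt.det := by
    rw [hLt_eq, Matrix.det_mul]
    exact ((Matrix.isUnit_iff_isUnit_det D).1 hDunit).mul hL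
  refine ⟨hdet, ?_⟩
  -- L is symmetric
  have hLsym : ∀ A B, L A B = L B A := by
    intro A B
    by_cases h : p A + p B = 1
    · have h0 : (p A).val * (p B).val = 0 := by
        rcases hzm (p A) with ha | ha <;> rcases hzm (p B) with hb | hb <;>
          rw [ha, hb] at h ⊢ <;>
          first
            | (exfalso; exact absurd h (by decide))
            | simp [hv0, hv1]
      rw [hsym A B, h0, pow_zero, one_mul]
    · rw [hhom A B h, hhom B A (by rwa [add_comm])]
  have hLTsym : Lᵀ = L := by ext A B; exact hLsym B A
  -- D * L * D = -L
  have hDLD : D * L * D = -L := by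
    ext A B
    rw [Matrix.mul_diagonal, Matrix.diagonal_mul]
    by_cases h : p A + p B = 1
    · rcases hzm (p A) with ha | ha <;> rcases hzm (p B) with hb | hb <;>
        rw [ha, hb] at h ⊢ <;>
        first
          | (exfalso; exact absurd h (by decide))
          | (simp [hv0, hv1, Matrix.neg_apply]; try ring)
    · simp [Matrix.neg_apply, hhom A B h]
  -- inverse facts
  have hLinv : L⁻¹ * L = 1 := Matrix.nonsing_inv_mul L hL
  have hLinv' : L * L⁻¹ = 1 := Matrix.mul_nonsing_inv L hL
  have hLt_inv : Lt⁻¹ = L⁻¹ * D := by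
    rw [hLt_eq]
    apply Matrix.inv_eq_right_inv
    calc D * L * (L⁻¹ * D) = D * (L * L⁻¹) * D := by noncomm_ring
      _ = 1 := by rw [hLinv', mul_one, hD2]
  have hLinvSym : ∀ A B, L⁻¹ A B = L⁻¹ B A := by
    intro A B
    have : (L⁻¹)ᵀ = L⁻¹ := by rw [Matrix.transpose_nonsing_inv, hLTsym]
    conv_lhs => rw [← this]
    rfl
  have hDLiD : D * L⁻¹ * D = -L⁻¹ := by
    have h1 : (D * L⁻¹ * D) * (D * L * D) = 1 := by
      calc (D * L⁻¹ * D) * (D * L * D) = D * L⁻¹ * (D * D) * L * D := by noncomm_ring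
        _ = D * (L⁻¹ * L) * D := by rw [hD2]; noncomm_ring
        _ = 1 := by rw [hLinv, mul_one, hD2]
    have h2 : (-L⁻¹) * (D * L * D) = 1 := by
      rw [hDLD]; simp [hLinv]
    calc D * L⁻¹ * D = (D * L⁻¹ * D) * ((D * L * D) * (-L⁻¹)) := by
          rw [mul_eq_one_comm.1 h2, mul_one]
      _ = ((D * L⁻¹ * D) * (D * L * D)) * (-L⁻¹) := by noncomm_ring
      _ = -L⁻¹ := by rw [h1, one_mul]
  -- L⁻¹ is odd-homogeneous
  have hinvhom : ∀ A B, p A + p B ≠ 1 → L⁻¹ A B = 0 := by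
    intro A B h
    have key := congrFun (congrFun hDLiD A) B
    rw [Matrix.mul_diagonal, Matrix.diagonal_mul] at key
    have hone : (-1 : ℝ) ^ (p A).val * ((-1) ^ (p B).val) = 1 := by
      rcases hzm (p A) with ha | ha <;> rcases hzm (p B) with hb | hb <;>
        rw [ha, hb] at h ⊢ <;>
        first
          | (exfalso; exact absurd h (by decide))
          | simp [hv0, hv1]
    have key' : (-1 : ℝ) ^ (p A).val * L⁻¹ A B * (-1) ^ (p B).val = - L⁻¹ A B := key
    nlinarith [key', hone]
  intro A B
  rw [hLt_inv, Matrix.mul_diagonal, Matrix.mul_diagonal, hLinvSym B A]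
  by_cases h : p A + p B = 1
  · rcases hzm (p A) with ha | ha <;> rcases hzm (p B) with hb | hb <;>
      rw [ha, hb] at h ⊢ <;>
      first
        | (exfalso; exact absurd h (by decide))
        | (simp [hv0, hv1]; try ring)
  · rw [hinvhom A B h]; ring
end

section
/- Let ι be a type with a parity function p : ι → ZMod 2, and let T : ι → ι → ι → ℝ be an array (written T A C B, with A thought of as an upper index and C, B as lower indices) satisfying: (a) super-symmetry in the lower indices, T A C B = (−1)^{p C · p B} · T A B C for all A, B, C; and (b) the odd-orthogonal condition T A C B = −(−1)^{p B · p A} · T B C A for all A, B, C. Then T is identically zero. (This expresses the vanishing of the first Cartan prolongation of the Lie algebra of linear transformations preserving the odd antisymmetric tensor defining the odd Riemannian structure on ℝ^{n|n}, and hence the rigidity of odd Riemannian geometry.) -/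
/-- The first Cartan prolongation of the Lie algebra of linear transformations
preserving the odd Riemannian structure on `ℝ^{n|n}` vanishes: any array `T A C B`
(upper index `A`, lower indices `C, B`) over a type with parity function `p` that is
super-symmetric in the lower indices, `T A C B = (−1)^{p C · p B} T A B C`, and
satisfies the odd-orthogonal condition `T A C B = −(−1)^{p B · p A} T B C A`, is
identically zero. This expresses the rigidity of odd Riemannian geometry. -/
theorem odd_riemannian_first_prolongation_vanishes
    (ι : Type*) (p : ι → ZMod 2) (T : ι → ι → ι → ℝ)
    (hsym : ∀ A C B, T A C B = (-1 : ℝ) ^ ((p C).val * (p B).val) * T A B C)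
    (horth : ∀ A C B, T A C B = -(-1 : ℝ) ^ ((p B).val * (p A).val) * T B C A) :
    ∀ A C B, T A C B = 0 := by
  intro A C B
  have sq : ∀ n : ℕ, (-1 : ℝ) ^ n * (-1) ^ n = 1 := fun n => by
    rw [← pow_add]; exact Even.neg_one_pow ⟨n, rfl⟩
  have h1 := horth A C B
  have h2 := hsym B C A
  have h3 := horth B A C
  have h4 := hsym C A B
  have h5 := horth C B A
  have h6 := hsym A B C
  rw [h6] at h5; rw [h5] at h4; rw [h4] at h3; rw [h3] at h2; rw [h2] at h1
  rw [mul_comm ((p A).val) ((p B).val)] at h1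
  rw [mul_comm ((p B).val) ((p C).val)] at h1
  rw [mul_comm ((p C).val) ((p A).val)] at h1
  have key : T A C B =
      -(((-1:ℝ) ^ ((p B).val * (p A).val) * (-1) ^ ((p B).val * (p A).val)) *
        (((-1:ℝ) ^ ((p C).val * (p B).val) * (-1) ^ ((p C).val * (p B).val)) *
          (((-1:ℝ) ^ ((p A).val * (p C).val) * (-1) ^ ((p A).val * (p C).val)) *
            T A C B))) := by linear_combination h1
  rw [sq, sq, sq] at key
  linarith
end
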